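/- Let λ be a nonzero real number, Δt > 0, and q a nonnegative integer. Then the divided difference of the exponential at the arithmetic progression inputs satisfies (Δt)^q · e[Δt·qλ, Δt·(q−1)λ, ..., Δt·λ, 0] = (1/q!) · ((e^{λΔt} − 1)/λ)^q. -/

import Mathlib

/-!
Write the series as `e_r[y] = ∑_k ∏ y_j^{k_j} / (r + |k|)!`. Splitting the multi-index at a
coordinate `p` into the terms with `k_p = 0` and those with `k_p ≥ 1` gives
`e_r[y] = e_r[y without y_p] + y_p · e_{r+1}[y]`, and comparing `p = first` with `p = last` yields
the divided-difference recursion `(y₀ - y_last) · e[y] = e[y without y_last] - e[y without y₀]`.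
For the progression `x + qa, …, x + a, x` the two shorter progressions differ only by the shift
`x ↦ x + a`, so induction on `q` gives `a^q · e[x + qa, …, x] = e^x (e^a - 1)^q / q!`.
-/

open scoped BigOperators

/-- Divided difference of the exponential at `q+1` real points,
given via its power-series expansion. -/
noncomputable def expDDR {q : ℕ} (y : Fin (q + 1) → ℝ) : ℝ :=
  ∑' k : Fin (q + 1) → ℕ, (∏ j, y j ^ k j) / ((Nat.factorial (q + ∑ j, k j) : ℝ))

open scoped Nat

theorem summable_fin_pi_prod {β : Type*} {n : ℕ} {g : Fin n → β → ℝ}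
    (hg₀ : ∀ j b, 0 ≤ g j b) (hg : ∀ j, Summable (g j)) :
    Summable fun k : Fin n → β => ∏ j, g j (k j) := by
  induction n with
  | zero => exact .of_finite
  | succ n ih =>
    have htail := ih (fun j b => hg₀ j.succ b) (fun j => hg j.succ)
    have hcons := (hg 0).mul_of_nonneg htail (hg₀ 0) fun k =>
      Finset.prod_nonneg fun j _ => hg₀ _ _
    rw [← (Fin.consEquiv fun _ => β).summable_iff]
    refine hcons.congr fun x => ?_
    simp [Fin.prod_univ_succ, Fin.consEquiv]

theorem tsum_nat_prod_eq_zero_add {β E : Type*} [NormedAddCommGroup E] [CompleteSpace E]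
    {f : ℕ × β → E} (hf : Summable f) :
    ∑' x, f x = ∑' b, f (0, b) + ∑' x : ℕ × β, f (x.1 + 1, x.2) := by
  have hshift : Summable fun x : ℕ × β => f (x.1 + 1, x.2) :=
    hf.comp_injective fun x y h => by simpa [Prod.ext_iff] using h
  rw [hf.tsum_prod, hf.prod.tsum_eq_zero_add, hshift.tsum_prod]

/-- With `n = r + 1` points this is `expDDR`; the offset `r` is what changes when one coordinate
of the multi-index is split off. -/
noncomputable def expDDSeries (r : ℕ) {n : ℕ} (y : Fin n → ℝ) : ℝ :=
  ∑' k : Fin n → ℕ, (∏ j, y j ^ k j) / ((r + ∑ j, k j)! : ℝ)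

theorem expDDR_eq_expDDSeries {q : ℕ} (y : Fin (q + 1) → ℝ) : expDDR y = expDDSeries q y :=
  rfl

theorem summable_expDDSeries (r : ℕ) {n : ℕ} (y : Fin n → ℝ) :
    Summable fun k : Fin n → ℕ => (∏ j, y j ^ k j) / ((r + ∑ j, k j)! : ℝ) := by
  refine .of_norm_bounded (summable_fin_pi_prod (g := fun j m => |y j| ^ m / (m ! : ℝ))
    (fun _ _ => by positivity) fun j => Real.summable_pow_div_factorial |y j|) fun k => ?_
  have hfact : ((∏ j, (k j)! : ℕ) : ℝ) ≤ ((r + ∑ j, k j)! : ℝ) := by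
    have hdvd := Nat.prod_factorial_dvd_factorial_sum Finset.univ k
    exact_mod_cast (Nat.le_of_dvd (Nat.factorial_pos _) hdvd).trans
      (Nat.factorial_le (Nat.le_add_left _ _))
  calc ‖(∏ j, y j ^ k j) / ((r + ∑ j, k j)! : ℝ)‖
      = (∏ j, |y j| ^ k j) / ((r + ∑ j, k j)! : ℝ) := by
        simp [Real.norm_eq_abs]
    _ ≤ (∏ j, |y j| ^ k j) / ((∏ j, (k j)! : ℕ) : ℝ) :=
        div_le_div_of_nonneg_left (by positivity) (by positivity) hfact
    _ = ∏ j, |y j| ^ k j / ((k j)! : ℝ) := by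
        rw [Finset.prod_div_distrib, Nat.cast_prod]

theorem expDDSeries_term_insertNth (r : ℕ) {n : ℕ} (y : Fin (n + 1) → ℝ) (p : Fin (n + 1))
    (m : ℕ) (k : Fin n → ℕ) :
    (∏ j, y j ^ p.insertNth m k j) / ((r + ∑ j, p.insertNth m k j)! : ℝ) =
      y p ^ m * ((∏ j, y (p.succAbove j) ^ k j) / ((r + m + ∑ j, k j)! : ℝ)) := by
  rw [Fin.prod_univ_succAbove _ p, Fin.sum_univ_succAbove _ p]
  simp only [Fin.insertNth_apply_same, Fin.insertNth_apply_succAbove]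
  rw [add_assoc, mul_div_assoc]

theorem expDDSeries_eq_succAbove_add (r : ℕ) {n : ℕ} (y : Fin (n + 1) → ℝ) (p : Fin (n + 1)) :
    expDDSeries r y =
      expDDSeries r (fun j => y (p.succAbove j)) + y p * expDDSeries (r + 1) y := by
  set e := Fin.insertNthEquiv (fun _ => ℕ) p
  have hsum : Summable fun x => (∏ j, y j ^ e x j) / ((r + ∑ j, e x j)! : ℝ) :=
    e.summable_iff.2 (summable_expDDSeries r y)
  rw [expDDSeries, ← e.tsum_eq, tsum_nat_prod_eq_zero_add hsum, expDDSeries, expDDSeries,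
    ← tsum_mul_left, ← e.tsum_eq]
  congr 1 <;> refine tsum_congr fun x => ?_
  · simp only [e, Fin.insertNthEquiv_apply, expDDSeries_term_insertNth]
    simp
  · simp only [e, Fin.insertNthEquiv_apply, expDDSeries_term_insertNth]
    ring_nf

theorem sub_mul_expDDR {q : ℕ} (y : Fin (q + 2) → ℝ) :
    (y 0 - y (Fin.last (q + 1))) * expDDR y =
      expDDR (fun j => y j.castSucc) - expDDR (fun j => y j.succ) := by
  have hfirst := expDDSeries_eq_succAbove_add q y 0
  have hlast := expDDSeries_eq_succAbove_add q y (Fin.last (q + 1))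
  simp only [Fin.succAbove_zero, Fin.succAbove_last] at hfirst hlast
  simp only [expDDR_eq_expDDSeries]
  linear_combination hlast - hfirst

theorem expDDR_fin_one (y : Fin 1 → ℝ) : expDDR y = Real.exp (y 0) := by
  rw [Real.exp_eq_exp_ℝ, NormedSpace.exp_eq_tsum_div, expDDR,
    ← (Equiv.funUnique (Fin 1) ℕ).symm.tsum_eq]
  simp

theorem pow_mul_expDDR_arith_progression (a x : ℝ) (q : ℕ) :
    a ^ q * expDDR (fun j : Fin (q + 1) => x + ((q : ℝ) - (j : ℕ)) * a) =
      Real.exp x * (Real.exp a - 1) ^ q / q ! := by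
  induction q generalizing x with
  | zero => simp [expDDR_fin_one]
  | succ q ih =>
    have hrec := sub_mul_expDDR fun j : Fin (q + 2) => x + (((q + 1 : ℕ) : ℝ) - (j : ℕ)) * a
    have hcast : (fun j : Fin (q + 1) => x + (((q + 1 : ℕ) : ℝ) - (j.castSucc : ℕ)) * a) =
        fun j : Fin (q + 1) => (x + a) + ((q : ℝ) - (j : ℕ)) * a := by
      funext j; rw [Fin.val_castSucc]; push_cast; ring
    have hsucc : (fun j : Fin (q + 1) => x + (((q + 1 : ℕ) : ℝ) - (j.succ : ℕ)) * a) =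
        fun j : Fin (q + 1) => x + ((q : ℝ) - (j : ℕ)) * a := by
      funext j; rw [Fin.val_succ]; push_cast; ring
    simp only [hcast, hsucc, Fin.val_zero, Fin.val_last] at hrec
    have hshift := ih (x + a)
    rw [Real.exp_add] at hshift
    rw [Nat.factorial_succ, Nat.cast_mul, mul_comm ((q + 1 : ℕ) : ℝ), ← div_div,
      eq_div_iff (by positivity)]
    push_cast at hrec ⊢
    linear_combination a ^ q * hrec + hshift - ih x

theorem expDDR_arith_progression_general (q : ℕ) (lam Δt : ℝ) (hlam : lam ≠ 0) :
    Δt ^ q * expDDR (fun j : Fin (q + 1) => Δt * ((q - (j : ℕ) : ℕ) : ℝ) * lam) =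
      (1 / (Nat.factorial q : ℝ)) * ((Real.exp (lam * Δt) - 1) / lam) ^ q := by
  have hpoints : (fun j : Fin (q + 1) => Δt * ((q - (j : ℕ) : ℕ) : ℝ) * lam) =
      fun j : Fin (q + 1) => 0 + ((q : ℝ) - (j : ℕ)) * (lam * Δt) := by
    funext j
    rw [Nat.cast_sub j.is_le]
    ring
  have hprog := pow_mul_expDDR_arith_progression (lam * Δt) 0 q
  rw [Real.exp_zero, one_mul, mul_pow, mul_assoc] at hprog
  rw [hpoints]
  apply mul_left_cancel₀ (pow_ne_zero q hlam)
  rw [hprog, div_pow]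
  field_simp

/-- for `λ ≠ 0`, `Δt > 0` and the arithmetic-progression inputs
`Δt·qλ, Δt·(q−1)λ, ..., Δt·λ, 0`,
`(Δt)^q · e[Δt·qλ, ..., Δt·λ, 0] = (1/q!) · ((e^{λΔt} − 1)/λ)^q`. -/
theorem expDDR_arith_progression (q : ℕ) (lam Δt : ℝ) (hlam : lam ≠ 0) (hΔt : 0 < Δt) :
    Δt ^ q * expDDR (fun j : Fin (q + 1) => Δt * ((q - (j : ℕ) : ℕ) : ℝ) * lam) =
      (1 / (Nat.factorial q : ℝ)) * ((Real.exp (lam * Δt) - 1) / lam) ^ q :=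
  expDDR_arith_progression_general q lam Δt hlam
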